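/- arXiv:1802.06382 — 4 statements merged into one kernel-verified Lean document; each statement's English description precedes it below -/
import Mathlib

section
/- Let t ≥ 1 and let i : Fin t → ℤ be an injective function (t distinct integer inputs). Consider the map Φ from (Fin t → AddCircle (1 : ℝ)) to itself defined by Φ(a)_k = Σ_{j=0}^{t−1} (i k)^j • a_j, where (i k)^j • a_j denotes integer scalar multiplication on the circle ℝ/ℤ. Then Φ is measure-preserving with respect to the product of the Haar probability measures on the t copies of AddCircle 1. Equivalently, if a = (a_0, …, a_{t−1}) is uniformly distributed in [0,1)^t, then the vector (f_a(i_1), …, f_a(i_t)), where f_a(x) = Σ_{j=0}^{t−1} a_j x^j mod 1, is uniformly distributed in [0,1)^t. -/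
/-!
An integer matrix `A` acts on `Gⁿ` for any abelian group `G`. If `G` is divisible and
`det A ≠ 0`, this action is surjective: `A · adj A = det A • 1` and `det A • ·` is onto.
For the compact group `G = ℝ/ℤ`, a continuous surjective endomorphism of `Gⁿ` preserves
Haar measure, and the hash map is the action of the Vandermonde matrix of the inputs,
whose determinant is nonzero because the inputs are distinct.
-/

open MeasureTheory

instance : Fact ((0 : ℝ) < 1) := ⟨one_pos⟩

namespace Matrix

variable {l m n G : Type*} [Fintype n] [AddCommGroup G]

def intMulVecHom (A : Matrix m n ℤ) : (n → G) →+ (m → G) where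
  toFun a k := ∑ j, A k j • a j
  map_zero' := by ext k; simp
  map_add' a b := by ext k; simp [smul_add, Finset.sum_add_distrib]

@[simp]
lemma intMulVecHom_apply (A : Matrix m n ℤ) (a : n → G) (k : m) :
    A.intMulVecHom a k = ∑ j, A k j • a j :=
  rfl

lemma intMulVecHom_mul [Fintype m] (A : Matrix l m ℤ) (B : Matrix m n ℤ) (a : n → G) :
    (A * B).intMulVecHom a = A.intMulVecHom (B.intMulVecHom a) := by
  ext k
  simp only [intMulVecHom_apply, mul_apply, Finset.sum_smul, Finset.smul_sum, mul_smul]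
  exact Finset.sum_comm

lemma intMulVecHom_smul_one [DecidableEq n] (d : ℤ) (a : n → G) :
    (d • (1 : Matrix n n ℤ)).intMulVecHom a = d • a := by
  ext k
  simp only [intMulVecHom_apply, smul_apply, one_apply, smul_eq_mul, mul_ite, mul_one, mul_zero,
    ite_smul, zero_smul, Finset.sum_ite_eq, Finset.mem_univ, if_true, Pi.smul_apply]

lemma intMulVecHom_surjective [DecidableEq n] [DivisibleBy G ℤ] {A : Matrix n n ℤ}
    (hA : A.det ≠ 0) : Function.Surjective (A.intMulVecHom (G := G)) := by
  intro b
  obtain ⟨c, rfl⟩ := DivisibleBy.surjective_smul (n → G) ℤ hA b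
  refine ⟨A.adjugate.intMulVecHom c, ?_⟩
  rw [← intMulVecHom_mul, mul_adjugate, intMulVecHom_smul_one]

lemma continuous_intMulVecHom [TopologicalSpace G] [IsTopologicalAddGroup G]
    (A : Matrix m n ℤ) : Continuous (A.intMulVecHom (G := G)) :=
  continuous_pi fun _ => continuous_finsetSum _ fun j _ => (continuous_apply j).zsmul _

lemma measurePreserving_intMulVecHom [DecidableEq n] [TopologicalSpace G]
    [IsTopologicalAddGroup G] [CompactSpace G] [DivisibleBy G ℤ] [MeasurableSpace (n → G)]
    [BorelSpace (n → G)] (μ : Measure (n → G)) [μ.IsAddHaarMeasure] {A : Matrix n n ℤ}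
    (hA : A.det ≠ 0) : MeasurePreserving A.intMulVecHom μ μ :=
  A.intMulVecHom.measurePreserving (μ := μ) (ν := μ) (continuous_intMulVecHom A)
    (intMulVecHom_surjective hA) rfl

end Matrix

theorem vandermonde_hash_measurePreserving_general
    (t : ℕ) (i : Fin t → ℤ) (hi : Function.Injective i) :
    MeasurePreserving
      (fun (a : Fin t → AddCircle (1 : ℝ)) (k : Fin t) =>
        ∑ j : Fin t, ((i k) ^ (j : ℕ)) • a j)
      (Measure.pi fun _ => (volume : Measure (AddCircle (1 : ℝ))))
      (Measure.pi fun _ => (volume : Measure (AddCircle (1 : ℝ)))) :=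
  (Matrix.vandermonde i).measurePreserving_intMulVecHom _
    (Matrix.det_vandermonde_ne_zero_iff.mpr hi)

/-- The hash family `a ↦ (x ↦ ∑ j, a j • x^j mod 1)` is `t`-wise independent with
uniform marginals: for `t` distinct integer inputs `i 0, …, i (t-1)`, the map
sending a uniformly random coefficient vector `a ∈ (ℝ/ℤ)^t` to the vector of hash
values `(f_a (i 0), …, f_a (i (t-1)))` preserves the product Haar probability
measure on the torus `(ℝ/ℤ)^t`. -/
theorem vandermonde_hash_measurePreserving
    (t : ℕ) (ht : 1 ≤ t) (i : Fin t → ℤ) (hi : Function.Injective i) :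
    MeasurePreserving
      (fun (a : Fin t → AddCircle (1 : ℝ)) (k : Fin t) =>
        ∑ j : Fin t, ((i k) ^ (j : ℕ)) • a j)
      (Measure.pi fun _ => (volume : Measure (AddCircle (1 : ℝ))))
      (Measure.pi fun _ => (volume : Measure (AddCircle (1 : ℝ)))) :=
  vandermonde_hash_measurePreserving_general t i hi
end

section
/- Let a, b, c be natural numbers with a ≠ b and b ≠ c. Let p be the least index such that the p-th binary digit of a differs from the p-th binary digit of b, and let q be the least index such that the q-th binary digit of b differs from the q-th binary digit of c. Define label(a,b) = 2p + bit(p, b) and label(b,c) = 2q + bit(q, c), where bit(p, x) ∈ {0,1} is the p-th binary digit of x. Then label(a,b) ≠ label(b,c). -/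
/-- Alphabet reduction in ESP produces distinct adjacent labels: if `p` is the
least index at which the binary digits of `a` and `b` differ, and `q` is the
least index at which the binary digits of `b` and `c` differ, then
`2p + bit(p, b) ≠ 2q + bit(q, c)`. -/
theorem esp_alphabet_reduction_adjacent_labels_ne
    (a b c : ℕ) (hab : a ≠ b) (hbc : b ≠ c)
    (p q : ℕ)
    (hp : a.testBit p ≠ b.testBit p)
    (hpmin : ∀ p' < p, a.testBit p' = b.testBit p')
    (hq : b.testBit q ≠ c.testBit q)
    (hqmin : ∀ q' < q, b.testBit q' = c.testBit q') :
    2 * p + (if b.testBit p then 1 else 0) ≠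
      2 * q + (if c.testBit q then 1 else 0) := by
  intro h
  have hpq : p = q := by split_ifs at h <;> omega
  subst hpq
  split_ifs at h <;> simp_all
end

section
/- Let m ≥ 1 and let a, b be natural numbers with a < 2^m, b < 2^m, and a ≠ b. Let p be the least index such that the p-th binary digit of a differs from the p-th binary digit of b. Then 2p + bit(p, b) < 2m, where bit(p, x) ∈ {0,1} is the p-th binary digit of x. In particular, the labels produced by alphabet reduction on an alphabet of size 2^m lie in {0, 1, …, 2m − 1}, an alphabet of size 2m = 2·log₂(2^m). -/
/-- Alphabet reduction in ESP maps an alphabet of size `2^m` into the alphabet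
`{0, 1, …, 2m - 1}`: if `a, b < 2^m` with `a ≠ b` and `p` is the least index at
which the binary digits of `a` and `b` differ, then `2p + bit(p, b) < 2m`. -/
theorem esp_alphabet_reduction_label_lt
    (m : ℕ) (hm : 1 ≤ m) (a b : ℕ) (ha : a < 2 ^ m) (hb : b < 2 ^ m)
    (hab : a ≠ b)
    (p : ℕ)
    (hp : a.testBit p ≠ b.testBit p)
    (hpmin : ∀ p' < p, a.testBit p' = b.testBit p') :
    2 * p + (if b.testBit p then 1 else 0) < 2 * m := by
  have hpm : p < m := by
    by_contra h
    push_neg at h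
    have ha' : a.testBit p = false :=
      Nat.testBit_lt_two_pow (lt_of_lt_of_le ha (Nat.pow_le_pow_right (by norm_num) h))
    have hb' : b.testBit p = false :=
      Nat.testBit_lt_two_pow (lt_of_lt_of_le hb (Nat.pow_le_pow_right (by norm_num) h))
    exact hp (ha'.trans hb'.symm)
  split <;> omega
end

section
/- Let A : ℤ → Fin 3 be a bi-infinite sequence over the alphabet {0, 1, 2} such that A(i) ≠ A(i+1) for every i ∈ ℤ. Call a position i a local maximum if A(i−1) < A(i) and A(i+1) < A(i), and a local minimum if A(i−1) > A(i) and A(i+1) > A(i). Let L ⊆ ℤ be the set consisting of all local maxima together with all local minima i such that neither i−1 nor i+1 is a local maximum (the landmarks). Then for any two successive landmarks i, j ∈ L with i < j and no element of L strictly between them, either j − i = 2 or j − i = 3. -/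
/-- Spacing property of ESP landmarks: in a bi-infinite sequence `A` over the
three-letter alphabet `{0,1,2}` with no two equal adjacent characters, let the
landmarks be all local maxima, together with those local minima that are not
adjacent to a local maximum.  Then any two successive landmarks `i < j` satisfy
`j - i = 2` or `j - i = 3`. -/
theorem esp_landmark_spacing
    (A : ℤ → Fin 3)
    (hadj : ∀ i : ℤ, A i ≠ A (i + 1))
    (isMax isMin : ℤ → Prop)
    (hMax : ∀ i, isMax i ↔ (A (i - 1) < A i ∧ A (i + 1) < A i))
    (hMin : ∀ i, isMin i ↔ (A (i - 1) > A i ∧ A (i + 1) > A i))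
    (L : Set ℤ)
    (hL : ∀ i, i ∈ L ↔ (isMax i ∨ (isMin i ∧ ¬isMax (i - 1) ∧ ¬isMax (i + 1))))
    (i j : ℤ) (hi : i ∈ L) (hj : j ∈ L) (hij : i < j)
    (hsucc : ∀ k : ℤ, i < k → k < j → k ∉ L) :
    j - i = 2 ∨ j - i = 3 := by
  rw [hL] at hi hj
  -- successive adjacency as chains with normalized indices
  have adj : ∀ k : ℤ, A k ≠ A (k + 1) := hadj
  have a01 := adj i
  have a12 := adj (i + 1)
  have a23 := adj (i + 2)
  have a34 := adj (i + 3)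
  have e2 : i + 1 + 1 = i + 2 := by ring
  have e3 : i + 2 + 1 = i + 3 := by ring
  have e4 : i + 3 + 1 = i + 4 := by ring
  rw [e2] at a12
  rw [e3] at a23
  rw [e4] at a34
  -- Step 1 : j ≠ i + 1
  have hne1 : j ≠ i + 1 := by
    intro he
    subst he
    rcases hi with hmi | ⟨hmi, _, hni⟩
    · rcases hj with hmj | ⟨_, hnj, _⟩
      · rw [hMax] at hmi hmj
        rw [show i + 1 - 1 = i from by ring] at hmj
        exact absurd hmj.1 (not_lt.mpr (le_of_lt hmi.2))
      · rw [show i + 1 - 1 = i from by ring] at hnj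
        exact hnj hmi
    · rcases hj with hmj | ⟨hmj, _, _⟩
      · exact hni hmj
      · rw [hMin] at hmi hmj
        rw [show i + 1 - 1 = i from by ring] at hmj
        exact absurd hmj.1 (not_lt.mpr (le_of_lt hmi.2))
  -- Step 2 : j - i < 4
  have hlt4 : j - i < 4 := by
    by_contra h4
    push_neg at h4
    have h2lt : i + 2 < j := by omega
    have h3lt : i + 3 < j := by omega
    rcases hi with hmi | ⟨hmi, _, hni⟩
    · -- i is a local max
      rw [hMax] at hmi
      rcases lt_or_gt_of_ne a12 with h2 | h2
      · -- ascending from i+1 : A(i+1) < A(i+2)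
        rcases lt_or_gt_of_ne a23 with h3 | h3
        · -- A(i+2) < A(i+3), so chain forces A(i+3) = 2, i+3 is a max
          have h33 : A (i + 3) = 2 := by
            have v1 := (A (i + 1)).isLt
            have v2 := (A (i + 2)).isLt
            have v3 := (A (i + 3)).isLt
            rw [Fin.lt_def] at h2 h3
            exact Fin.ext (by omega)
          have h4lt : A (i + 4) < A (i + 3) := by
            rw [h33] at a34 ⊢
            rw [Fin.lt_def]
            have v4 := (A (i + 4)).isLt
            have : (A (i + 4)).val ≠ (2 : Fin 3).val := fun h => a34 (Fin.ext h.symm)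
            simp only [Fin.val_two] at this ⊢
            omega
          exact hsucc (i + 3) (by omega) h3lt ((hL _).mpr (Or.inl ((hMax _).mpr
            ⟨by rw [show i + 3 - 1 = i + 2 from by ring]; exact h3,
             by rw [e4]; exact h4lt⟩)))
        · -- A(i+3) < A(i+2), so i+2 is a max
          exact hsucc (i + 2) (by omega) h2lt ((hL _).mpr (Or.inl ((hMax _).mpr
            ⟨by rw [show i + 2 - 1 = i + 1 from by ring]; exact h2,
             by rw [e3]; exact h3⟩)))
      · -- descending : A(i+2) < A(i+1) < A(i), so A(i+2) = 0
        have h20 : A (i + 2) = 0 := by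
          have v0 := (A i).isLt
          have v1 := (A (i + 1)).isLt
          have v2 := (A (i + 2)).isLt
          have h2' : A (i + 2) < A (i + 1) := h2
          have hmi' : A (i + 1) < A i := hmi.2
          rw [Fin.lt_def] at h2' hmi'
          exact Fin.ext (by omega)
        have h3gt : A (i + 2) < A (i + 3) := by
          rw [h20] at a23 ⊢
          rw [Fin.lt_def]
          have : (0 : Fin 3).val ≠ (A (i + 3)).val := fun h => a23 (Fin.ext h)
          simp only [Fin.val_zero] at this ⊢
          omega
        by_cases hm3 : isMax (i + 3)
        · exact hsucc (i + 3) (by omega) h3lt ((hL _).mpr (Or.inl hm3))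
        · -- i+2 is a min landmark
          refine hsucc (i + 2) (by omega) h2lt ((hL _).mpr (Or.inr ⟨(hMin _).mpr
            ⟨by rw [show i + 2 - 1 = i + 1 from by ring]; exact h2,
             by rw [e3]; exact h3gt⟩, ?_, ?_⟩))
          · rw [show i + 2 - 1 = i + 1 from by ring, hMax]
            rintro ⟨h', _⟩
            rw [show i + 1 - 1 = i from by ring] at h'
            exact absurd h' (not_lt.mpr (le_of_lt hmi.2))
          · rw [e3]; exact hm3
    · -- i is a min landmark, so i+1 is not a max
      rw [hMin] at hmi
      rw [hMax] at hni
      rw [show i + 1 - 1 = i from by ring, e2] at hni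
      have h2 : A (i + 1) < A (i + 2) := by
        rcases lt_or_gt_of_ne a12 with h | h
        · exact h
        · exact absurd ⟨hmi.2, h⟩ hni
      -- chain A i < A(i+1) < A(i+2) forces A(i+2) = 2, max
      have h22 : A (i + 2) = 2 := by
        have v0 := (A i).isLt
        have v1 := (A (i + 1)).isLt
        have v2 := (A (i + 2)).isLt
        have hmi' : A i < A (i + 1) := hmi.2
        rw [Fin.lt_def] at h2 hmi'
        exact Fin.ext (by omega)
      have h3lt' : A (i + 3) < A (i + 2) := by
        rw [h22] at a23 ⊢
        rw [Fin.lt_def]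
        have v3 := (A (i + 3)).isLt
        have : (2 : Fin 3).val ≠ (A (i + 3)).val := fun h => a23 (Fin.ext h)
        simp only [Fin.val_two] at this ⊢
        omega
      exact hsucc (i + 2) (by omega) h2lt ((hL _).mpr (Or.inl ((hMax _).mpr
        ⟨by rw [show i + 2 - 1 = i + 1 from by ring]; exact h2,
         by rw [e3]; exact h3lt'⟩)))
  omega
end
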